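/- arXiv:math/0010070 — 2 statements merged into one kernel-verified Lean document; each statement's English description precedes it below -/
import Mathlib

section
/- The k-creature averaging functions F* are nice; that is, for every k-creature t = (n_t, g_t, P_t): (α) if r_f ≤ r'_f for all f ∈ P_t then F*_t(r) ≤ F*_t(r'); (γ) F*_t(b·r_f : f ∈ P_t) = b·F*_t(r_f : f ∈ P_t) for every b ∈ [0,1]; (δ) for every r ∈ [0,1]^{P_t} and ε > 0 there are reals r'_f > r_f such that every r'' ∈ [0,1]^{P_t} with r_f ≤ r''_f < r'_f for all f satisfies F*_t(r'') < F*_t(r) + ε; and (β) if n_t ≥ 2 and r_f, r⁰_f, r¹_f ∈ [0,1] (f ∈ P_t) satisfy r⁰_f + r¹_f ≥ r_f for all f and F*_t(r_f : f ∈ P_t) ≥ 2^(−2^k), then there are reals c₀, c₁ with c₀ + c₁ = (1 − 2^(−2^k))·F*_t(r_f : f ∈ P_t) and k-creatures s₀, s₁ ∈ Σ*(t) such that whenever ℓ < 2 and c_ℓ > 0: n_{s_ℓ} ≥ n_t − 1, P_{s_ℓ} ⊆ { f ∈ P_t : r^ℓ_f > 0 }, and F*_{s_ℓ}(r^ℓ_f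 : f ∈ P_{s_ℓ}) ≥ c_ℓ. (Here, for X ⊆ P_t and r ∈ [0,1]^X, F*_t(r_f : f ∈ X) denotes F*_t applied to the extension of r by zero outside X.) -/
/-!
`F*_t(r)` is a minimum of finitely many averages of `r`, each linear and monotone in `r`, which
gives (α), (γ) and (δ).

For (β), let `a = F*_t(r)`, `ε = 2^(-2^k)`, `M = 2^(2^(k+1) + 2^(k+3))` and `B = 2^(k+3) M`.
Let `h₀` maximize `G = F*(r⁰)` among the extensions of `g_t` by at most `B` points, give
`c₀ = min G ((1 - ε) a)` to `r⁰` and the rest `c₁` to `r¹`. Suppose `c₁ > 0` but `F*(r¹) < c₁`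
at all those extensions.
Where `F*(r⁰)` at `g_t` is attained, `r ≤ r⁰ + r¹` makes the average of `r¹` exceed `c₁` by
`ε a`. An average at `h` is the mean of the averages at the `2^d` refinements of `h` to the domain
of the extension realizing `F*(r¹)(h)`; one of them is below `c₁`, so another one exceeds `c₁` by
`1 + 2^(-2^(k+3))` times the old excess. After `M` such rounds an average of `r¹ ≤ 1` would exceed
`1`. The growth of `φ` leaves room for the `B` new points, so the creatures built on `h₀`, `h₁`
have norm `n_t - 1`.
-/

namespace MeasuredCreatures

/-- The condition on the parameter function `φ = φ_k`:
`φ(0) = 2^(k+4)` and `φ(i+1) > 2^(2^(k+3)) + φ(i) + 2^(2k+7)/log₂(1 + 2^(−2^(2k+7)))`. -/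
def PhiCond (k : ℕ) (φ : ℕ → ℕ) : Prop :=
  φ 0 = 2 ^ (k + 4) ∧
  ∀ i : ℕ, (φ (i + 1) : ℝ) >
    (2 : ℝ) ^ (2 ^ (k + 3)) + (φ i : ℝ) +
      (2 : ℝ) ^ (2 * k + 7) / Real.logb 2 (1 + ((2 : ℝ) ^ (2 ^ (2 * k + 7)))⁻¹)

/-- `N = N_k = 2^(1+⌊log₂ φ(k+1)⌋)`. -/
def Nval (k : ℕ) (φ : ℕ → ℕ) : ℕ := 2 ^ (1 + Nat.log 2 (φ (k + 1)))

/-- The domain of a partial function `g` from `{0,…,N−1}` to `{0,1}`. -/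
def pdom {N : ℕ} (g : Fin N → Option Bool) : Finset (Fin N) :=
  Finset.univ.filter fun i => (g i).isSome

/-- `g ⊆ g'` for partial functions. -/
def PSub {N : ℕ} (g g' : Fin N → Option Bool) : Prop :=
  ∀ (i : Fin N) (b : Bool), g i = some b → g' i = some b

/-- `g ⊆ f` for a partial function `g` and a total function `f`. -/
def PSubF {N : ℕ} (g : Fin N → Option Bool) (f : Fin N → Bool) : Prop :=
  ∀ (i : Fin N) (b : Bool), g i = some b → f i = b

/-- A `k`-creature: a triple `(n, g, P)` with `n ≤ k` (the norm), `g` a partial function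
from `{0,…,N−1}` to `{0,1}` with `|dom g| ≤ φ(k−n)`, and `P` a nonempty set of total
functions extending `g`. -/
structure Creature (k N : ℕ) (φ : ℕ → ℕ) where
  n : ℕ
  g : Fin N → Option Bool
  P : Finset (Fin N → Bool)
  n_le : n ≤ k
  g_card : (pdom g).card ≤ φ (k - n)
  P_ne : P.Nonempty
  P_ext : ∀ f ∈ P, PSubF g f

/-- `s ∈ Σ*(t)`. -/
def SigmaRel {k N : ℕ} {φ : ℕ → ℕ} (s t : Creature k N φ) : Prop :=
  s.n ≤ t.n ∧ PSub t.g s.g ∧ s.P ⊆ t.P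

open Classical in
/-- The averaging function
`F*_t(r) = min { 2^(|dom h|−N) · Σ{ r_f : f ∈ P_t, h ⊆ f } : g_t ⊆ h, |dom h ∖ dom g_t| ≤ 2^(k+3) }`. -/
noncomputable def Fstar {k N : ℕ} {φ : ℕ → ℕ} (t : Creature k N φ)
    (r : (Fin N → Bool) → ℝ) : ℝ :=
  sInf {v : ℝ | ∃ h : Fin N → Option Bool,
    PSub t.g h ∧ (pdom h \ pdom t.g).card ≤ 2 ^ (k + 3) ∧
    v = (2 : ℝ) ^ (((pdom h).card : ℤ) - (N : ℤ)) *
      ∑ f ∈ t.P, (if PSubF h f then r f else 0)}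

lemma exists_ge_of_sum_eq_two_pow_mul {ι : Type*} [DecidableEq ι] {s : Finset ι} {F : ι → ℝ}
    {d m : ℕ} {v c : ℝ} (hdm : d ≤ m) (hs : s.card ≤ 2 ^ d) (hsum : ∑ i ∈ s, F i = 2 ^ d * v)
    (hc : 0 ≤ c) (hcv : c < v) {i₀ : ι} (hi₀ : i₀ ∈ s) (hF : F i₀ < c) :
    ∃ i ∈ s, c + (v - c) * (1 + ((2 : ℝ) ^ m)⁻¹) ≤ F i := by
  set q : ℝ := ((2 : ℝ) ^ m)⁻¹
  by_contra! hlt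
  have hq : (2 : ℝ) ^ d * q ≤ 1 := by
    rw [← div_eq_mul_inv, div_le_one (by positivity)]
    exact pow_le_pow_right₀ one_le_two hdm
  have hcard : ((s.erase i₀).card : ℝ) ≤ 2 ^ d - 1 := by
    rw [Finset.card_erase_of_mem hi₀, Nat.cast_sub (Finset.card_pos.2 ⟨i₀, hi₀⟩), Nat.cast_one]
    gcongr
    exact_mod_cast hs
  have hrest : ∑ i ∈ s.erase i₀, F i ≤ (2 ^ d - 1) * (c + (v - c) * (1 + q)) :=
    calc ∑ i ∈ s.erase i₀, F i ≤ (s.erase i₀).card * (c + (v - c) * (1 + q)) := by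
          rw [← nsmul_eq_mul]
          exact Finset.sum_le_card_nsmul _ _ _
            fun i hi => (hlt i (Finset.mem_of_mem_erase hi)).le
      _ ≤ (2 ^ d - 1) * (c + (v - c) * (1 + q)) := by gcongr
  have hsplit := Finset.sum_erase_add s F hi₀
  have hq0 : 0 ≤ q := by positivity
  nlinarith [mul_nonneg (sub_pos.2 hcv).le (sub_nonneg.2 hq), mul_nonneg (sub_pos.2 hcv).le hq0]

section PartialFunctions

open Classical

variable {N : ℕ}

lemma PSub.refl (g : Fin N → Option Bool) : PSub g g := fun _ _ hb => hb

lemma PSub.trans {g h h' : Fin N → Option Bool} (hgh : PSub g h) (hhh' : PSub h h') :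
    PSub g h' := fun i b hb => hhh' i b (hgh i b hb)

lemma PSub.psubF {g h : Fin N → Option Bool} {f : Fin N → Bool} (hgh : PSub g h)
    (hhf : PSubF h f) : PSubF g f := fun i b hb => hhf i b (hgh i b hb)

lemma mem_pdom {g : Fin N → Option Bool} {i : Fin N} : i ∈ pdom g ↔ (g i).isSome := by
  simp [pdom]

lemma notMem_pdom {g : Fin N → Option Bool} {i : Fin N} : i ∉ pdom g ↔ g i = none := by
  simp [mem_pdom]

lemma PSub.pdom_subset {g h : Fin N → Option Bool} (hgh : PSub g h) : pdom g ⊆ pdom h := by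
  intro i hi
  obtain ⟨b, hb⟩ := Option.isSome_iff_exists.1 (mem_pdom.1 hi)
  exact mem_pdom.2 (by rw [hgh i b hb]; rfl)

lemma card_pdom_le (g : Fin N → Option Bool) : (pdom g).card ≤ N := by
  simpa using Finset.card_le_univ (pdom g)

lemma card_sdiff_pdom_le_add {g h h' : Fin N → Option Bool} (hgh : PSub g h)
    (hhh' : PSub h h') :
    (pdom h' \ pdom g).card ≤ (pdom h' \ pdom h).card + (pdom h \ pdom g).card := by
  have := Finset.card_sdiff_add_card_eq_card hgh.pdom_subset
  have := Finset.card_sdiff_add_card_eq_card hhh'.pdom_subset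
  have := Finset.card_sdiff_add_card_eq_card (hgh.trans hhh').pdom_subset
  omega

def restrictTo (f : Fin N → Bool) (D : Finset (Fin N)) : Fin N → Option Bool :=
  fun i => if i ∈ D then some (f i) else none

@[simp]
lemma pdom_restrictTo (f : Fin N → Bool) (D : Finset (Fin N)) : pdom (restrictTo f D) = D := by
  ext i
  by_cases hi : i ∈ D <;> simp [mem_pdom, restrictTo, hi]

lemma psubF_iff_eq_restrictTo {h : Fin N → Option Bool} {f : Fin N → Bool} :
    PSubF h f ↔ h = restrictTo f (pdom h) := by
  constructor
  · intro hf
    funext i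
    by_cases hi : i ∈ pdom h
    · obtain ⟨b, hb⟩ := Option.isSome_iff_exists.1 (mem_pdom.1 hi)
      rw [restrictTo, if_pos hi, hb, hf i b hb]
    · rw [restrictTo, if_neg hi, notMem_pdom.1 hi]
  · intro hh i b hb
    rw [hh, restrictTo] at hb
    split_ifs at hb
    exact Option.some.inj hb

lemma psub_restrictTo_iff {h : Fin N → Option Bool} {f : Fin N → Bool} {D : Finset (Fin N)}
    (hD : pdom h ⊆ D) : PSub h (restrictTo f D) ↔ PSubF h f := by
  constructor
  · intro hh i b hb
    have := hh i b hb
    rw [restrictTo] at this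
    split_ifs at this
    exact Option.some.inj this
  · intro hf i b hb
    have hi : i ∈ D := hD (mem_pdom.2 (by simp [hb]))
    simp [restrictTo, hi, hf i b hb]

noncomputable def pieces (h : Fin N → Option Bool) (D : Finset (Fin N)) :
    Finset (Fin N → Option Bool) :=
  {h' | pdom h' = D ∧ PSub h h'}

lemma mem_pieces {h h' : Fin N → Option Bool} {D : Finset (Fin N)} :
    h' ∈ pieces h D ↔ pdom h' = D ∧ PSub h h' := by
  simp [pieces]

lemma card_pieces_le (h : Fin N → Option Bool) (D : Finset (Fin N)) :
    (pieces h D).card ≤ 2 ^ (D \ pdom h).card := by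
  have hinj : Set.InjOn
      (fun (h' : Fin N → Option Bool) (i : ↥(D \ pdom h)) => (h' i).getD false) (pieces h D) := by
    intro h₁ hh₁ h₂ hh₂ heq
    obtain ⟨hD₁, hsub₁⟩ := mem_pieces.1 hh₁
    obtain ⟨hD₂, hsub₂⟩ := mem_pieces.1 hh₂
    funext i
    by_cases hih : i ∈ pdom h
    · obtain ⟨b, hb⟩ := Option.isSome_iff_exists.1 (mem_pdom.1 hih)
      rw [hsub₁ i b hb, hsub₂ i b hb]
    by_cases hiD : i ∈ D
    · obtain ⟨b₁, hb₁⟩ := Option.isSome_iff_exists.1 (mem_pdom.1 (hD₁ ▸ hiD))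
      obtain ⟨b₂, hb₂⟩ := Option.isSome_iff_exists.1 (mem_pdom.1 (hD₂ ▸ hiD))
      have := congrFun heq ⟨i, Finset.mem_sdiff.2 ⟨hiD, hih⟩⟩
      simp_all
    · rw [notMem_pdom.1 (hD₁ ▸ hiD : i ∉ pdom h₁), notMem_pdom.1 (hD₂ ▸ hiD : i ∉ pdom h₂)]
  calc (pieces h D).card ≤ Fintype.card ((D \ pdom h : Finset (Fin N)) → Bool) :=
        Finset.card_le_card_of_injOn _ (fun _ _ => Finset.mem_coe.2 (Finset.mem_univ _)) hinj
    _ = 2 ^ (D \ pdom h).card := by rw [Fintype.card_fun, Fintype.card_coe, Fintype.card_bool]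

lemma card_filter_psubF_le (h : Fin N → Option Bool) :
    ({f | PSubF h f} : Finset (Fin N → Bool)).card ≤ 2 ^ (N - (pdom h).card) :=
  calc ({f | PSubF h f} : Finset (Fin N → Bool)).card ≤ (pieces h Finset.univ).card := by
        refine Finset.card_le_card_of_injOn (restrictTo · Finset.univ) (fun f hf => ?_) ?_
        · simp only [Finset.coe_filter, Finset.mem_univ, true_and] at hf
          simpa [mem_pieces, psub_restrictTo_iff (Finset.subset_univ _)] using hf
        · intro f _ f' _ heq
          funext i
          simpa [restrictTo] using congrFun heq i
    _ ≤ 2 ^ (N - (pdom h).card) := by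
        simpa [← Finset.compl_eq_univ_sdiff, Finset.card_compl] using card_pieces_le h Finset.univ

end PartialFunctions

section Averages

open Classical

variable {N : ℕ} {P : Finset (Fin N → Bool)} {x y : (Fin N → Bool) → ℝ} {m : ℕ}
  {g h : Fin N → Option Bool}

/-- The mean of `x` (read as `0` outside `P`) over the `2^(N - |dom h|)` total extensions
of `h`. -/
noncomputable def extAvg (P : Finset (Fin N → Bool)) (x : (Fin N → Bool) → ℝ)
    (h : Fin N → Option Bool) : ℝ :=
  (2 : ℝ) ^ (((pdom h).card : ℤ) - (N : ℤ)) * ∑ f ∈ P, if PSubF h f then x f else 0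

lemma extAvg_nonneg (hx : ∀ f ∈ P, 0 ≤ x f) : 0 ≤ extAvg P x h :=
  mul_nonneg (by positivity) (Finset.sum_nonneg fun f hf => ite_nonneg (hx f hf) le_rfl)

lemma extAvg_mono (hxy : ∀ f ∈ P, x f ≤ y f) : extAvg P x h ≤ extAvg P y h := by
  unfold extAvg
  gcongr with f hf
  split_ifs
  exacts [hxy f hf, le_rfl]

lemma extAvg_const_mul (b : ℝ) : extAvg P (fun f => b * x f) h = b * extAvg P x h := by
  simp only [extAvg, Finset.mul_sum]
  refine Finset.sum_congr rfl fun f _ => ?_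
  split_ifs <;> ring

lemma extAvg_le_one (hx : ∀ f ∈ P, x f ≤ 1) : extAvg P x h ≤ 1 := by
  have hsum : (∑ f ∈ P, if PSubF h f then x f else 0) ≤ (2 : ℝ) ^ (N - (pdom h).card) :=
    calc (∑ f ∈ P, if PSubF h f then x f else 0)
        ≤ ∑ f ∈ P, if PSubF h f then (1 : ℝ) else 0 := by
          gcongr with f hf
          split_ifs
          exacts [hx f hf, le_rfl]
      _ ≤ ∑ f, if PSubF h f then (1 : ℝ) else 0 :=
          Finset.sum_le_sum_of_subset_of_nonneg (Finset.subset_univ _)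
            fun _ _ _ => by positivity
      _ ≤ (2 : ℝ) ^ (N - (pdom h).card) := by
          rw [Finset.sum_boole]
          exact_mod_cast card_filter_psubF_le h
  calc extAvg P x h
      ≤ (2 : ℝ) ^ (((pdom h).card : ℤ) - (N : ℤ)) * 2 ^ (N - (pdom h).card) := by
        unfold extAvg; gcongr
    _ = 1 := by
        rw [← zpow_natCast, ← zpow_add₀ two_ne_zero, Nat.cast_sub (card_pdom_le h)]
        simp

lemma extAvg_add : extAvg P (fun f => x f + y f) h = extAvg P x h + extAvg P y h := by
  simp only [extAvg, ← mul_add, ← Finset.sum_add_distrib, ite_add_ite, add_zero]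

lemma extAvg_add_const_le {c : ℝ} (hc : 0 ≤ c) :
    extAvg P (fun f => x f + c) h ≤ extAvg P x h + c := by
  have hconst : extAvg P (fun _ => c) h = c * extAvg P (fun _ => 1) h := by
    simpa using extAvg_const_mul (P := P) (x := fun _ => 1) (h := h) c
  have hone : extAvg P (fun _ => 1) h ≤ 1 := extAvg_le_one fun _ _ => le_rfl
  rw [extAvg_add, hconst]
  nlinarith

lemma extAvg_filter {q : (Fin N → Bool) → Prop} [DecidablePred q]
    (hq : ∀ f ∈ P, PSubF h f → ¬ q f → x f = 0) :
    extAvg (P.filter q) x h = extAvg P x h := by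
  unfold extAvg
  rw [Finset.sum_filter_of_ne]
  intro f hf hne
  by_contra hnq
  split_ifs at hne with hhf
  exacts [hne (hq f hf hhf hnq), hne rfl]

lemma sum_pieces_ite {D : Finset (Fin N)} (hD : pdom h ⊆ D) :
    ∑ h' ∈ pieces h D, (∑ f ∈ P, if PSubF h' f then x f else 0) =
      ∑ f ∈ P, if PSubF h f then x f else 0 := by
  rw [Finset.sum_comm]
  refine Finset.sum_congr rfl fun f _ => ?_
  calc ∑ h' ∈ pieces h D, (if PSubF h' f then x f else 0)
      = ∑ h' ∈ pieces h D, if h' = restrictTo f D then x f else 0 := by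
        refine Finset.sum_congr rfl fun h' hh' => if_congr ?_ rfl rfl
        rw [psubF_iff_eq_restrictTo, (mem_pieces.1 hh').1]
    _ = if PSubF h f then x f else 0 := by
        rw [Finset.sum_ite_eq']
        refine if_congr ?_ rfl rfl
        rw [mem_pieces, pdom_restrictTo, psub_restrictTo_iff hD]
        simp

lemma sum_extAvg_pieces {h' : Fin N → Option Bool} (hhh' : PSub h h') :
    ∑ h'' ∈ pieces h (pdom h'), extAvg P x h'' =
      2 ^ (pdom h' \ pdom h).card * extAvg P x h := by
  calc ∑ h'' ∈ pieces h (pdom h'), extAvg P x h''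
      = (2 : ℝ) ^ (((pdom h').card : ℤ) - (N : ℤ)) *
          ∑ h'' ∈ pieces h (pdom h'), (∑ f ∈ P, if PSubF h'' f then x f else 0) := by
        rw [Finset.mul_sum]
        refine Finset.sum_congr rfl fun h'' hh'' => ?_
        rw [extAvg, (mem_pieces.1 hh'').1]
    _ = 2 ^ (pdom h' \ pdom h).card * extAvg P x h := by
        rw [sum_pieces_ite hhh'.pdom_subset, extAvg, ← mul_assoc, ← zpow_natCast,
          ← zpow_add₀ two_ne_zero, ← Finset.card_sdiff_add_card_eq_card hhh'.pdom_subset]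
        push_cast
        ring_nf

end Averages

section MinAverages

open Classical

variable {N : ℕ} {P Q : Finset (Fin N → Bool)} {x y : (Fin N → Bool) → ℝ} {m : ℕ}
  {g h : Fin N → Option Bool}

def extAvgValues (m : ℕ) (P : Finset (Fin N → Bool)) (x : (Fin N → Bool) → ℝ)
    (g : Fin N → Option Bool) : Set ℝ :=
  {v | ∃ h : Fin N → Option Bool, PSub g h ∧ (pdom h \ pdom g).card ≤ m ∧ v = extAvg P x h}

noncomputable def minExtAvg (m : ℕ) (P : Finset (Fin N → Bool)) (x : (Fin N → Bool) → ℝ)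
    (g : Fin N → Option Bool) : ℝ :=
  sInf (extAvgValues m P x g)

lemma fstar_eq_minExtAvg {k : ℕ} {φ : ℕ → ℕ} (t : Creature k N φ) (x : (Fin N → Bool) → ℝ) :
    Fstar t x = minExtAvg (2 ^ (k + 3)) t.P x t.g :=
  rfl

lemma finite_extAvgValues : (extAvgValues m P x g).Finite :=
  (Set.finite_range (extAvg P x)).subset (by rintro _ ⟨h, -, -, rfl⟩; exact ⟨h, rfl⟩)

lemma minExtAvg_le (hgh : PSub g h) (hd : (pdom h \ pdom g).card ≤ m) :
    minExtAvg m P x g ≤ extAvg P x h :=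
  csInf_le finite_extAvgValues.bddBelow ⟨h, hgh, hd, rfl⟩

lemma exists_minExtAvg_eq (m : ℕ) (P : Finset (Fin N → Bool)) (x : (Fin N → Bool) → ℝ)
    (g : Fin N → Option Bool) :
    ∃ h, PSub g h ∧ (pdom h \ pdom g).card ≤ m ∧ minExtAvg m P x g = extAvg P x h :=
  Set.Nonempty.csInf_mem (s := extAvgValues m P x g) ⟨_, g, PSub.refl g, by simp, rfl⟩
    finite_extAvgValues

lemma le_minExtAvg {c : ℝ}
    (H : ∀ h, PSub g h → (pdom h \ pdom g).card ≤ m → c ≤ extAvg P x h) :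
    c ≤ minExtAvg m P x g := by
  obtain ⟨h, hgh, hd, heq⟩ := exists_minExtAvg_eq m P x g
  exact heq ▸ H h hgh hd

lemma minExtAvg_congr (H : ∀ h, PSub g h → extAvg P x h = extAvg Q y h) :
    minExtAvg m P x g = minExtAvg m Q y g :=
  le_antisymm (le_minExtAvg fun h hgh hd => (minExtAvg_le hgh hd).trans_eq (H h hgh))
    (le_minExtAvg fun h hgh hd => (minExtAvg_le hgh hd).trans_eq (H h hgh).symm)

lemma minExtAvg_nonneg (hx : ∀ f ∈ P, 0 ≤ x f) : 0 ≤ minExtAvg m P x g :=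
  le_minExtAvg fun _ _ _ => extAvg_nonneg hx

lemma minExtAvg_mono (hxy : ∀ f ∈ P, x f ≤ y f) : minExtAvg m P x g ≤ minExtAvg m P y g :=
  le_minExtAvg fun _ hgh hd => (minExtAvg_le hgh hd).trans (extAvg_mono hxy)

lemma minExtAvg_const_mul {b : ℝ} (hb : 0 ≤ b) :
    minExtAvg m P (fun f => b * x f) g = b * minExtAvg m P x g := by
  obtain ⟨h, hgh, hd, heq⟩ := exists_minExtAvg_eq m P x g
  obtain ⟨h', hgh', hd', heq'⟩ := exists_minExtAvg_eq m P (fun f => b * x f) g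
  refine le_antisymm ?_ ?_
  · calc minExtAvg m P (fun f => b * x f) g ≤ extAvg P (fun f => b * x f) h :=
          minExtAvg_le hgh hd
      _ = b * minExtAvg m P x g := by rw [extAvg_const_mul, heq]
  · calc b * minExtAvg m P x g ≤ b * extAvg P x h' := by gcongr; exact minExtAvg_le hgh' hd'
      _ = minExtAvg m P (fun f => b * x f) g := by rw [heq', extAvg_const_mul]

lemma exists_forall_minExtAvg_lt_add (m : ℕ) (P : Finset (Fin N → Bool))
    (x : (Fin N → Bool) → ℝ) (g : Fin N → Option Bool) {ε : ℝ} (hε : 0 < ε) :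
    ∃ x' : (Fin N → Bool) → ℝ, (∀ f ∈ P, x f < x' f) ∧ ∀ y : (Fin N → Bool) → ℝ,
      (∀ f ∈ P, x f ≤ y f ∧ y f < x' f) → minExtAvg m P y g < minExtAvg m P x g + ε := by
  refine ⟨fun f => x f + ε / 2, fun f _ => by linarith, fun y hy => ?_⟩
  obtain ⟨h, hgh, hd, heq⟩ := exists_minExtAvg_eq m P x g
  calc minExtAvg m P y g ≤ extAvg P y h := minExtAvg_le hgh hd
    _ ≤ extAvg P (fun f => x f + ε / 2) h := extAvg_mono fun f hf => (hy f hf).2.le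
    _ ≤ extAvg P x h + ε / 2 := extAvg_add_const_le (by positivity)
    _ < minExtAvg m P x g + ε := by rw [heq]; linarith

end MinAverages

section Splitting

open Classical

variable {N : ℕ} {P : Finset (Fin N → Bool)} {x : (Fin N → Bool) → ℝ} {m : ℕ}
  {g h : Fin N → Option Bool}

lemma exists_extAvg_ge_of_minExtAvg_lt {c : ℝ} (hc : 0 ≤ c) (hcv : c < extAvg P x h)
    (hmin : minExtAvg m P x h < c) :
    ∃ h', PSub h h' ∧ (pdom h' \ pdom h).card ≤ m ∧
      c + (extAvg P x h - c) * (1 + ((2 : ℝ) ^ m)⁻¹) ≤ extAvg P x h' := by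
  obtain ⟨h₀, hhh₀, hd₀, heq⟩ := exists_minExtAvg_eq m P x h
  obtain ⟨h', hh', hval⟩ := exists_ge_of_sum_eq_two_pow_mul hd₀ (card_pieces_le h _)
    (sum_extAvg_pieces hhh₀) hc hcv (mem_pieces.2 ⟨rfl, hhh₀⟩) (heq ▸ hmin)
  obtain ⟨hdom, hhh'⟩ := mem_pieces.1 hh'
  exact ⟨h', hhh', hdom ▸ hd₀, hval⟩

lemma exists_extAvg_ge_pow_of_forall_minExtAvg_lt {c γ : ℝ} (hc : 0 ≤ c) (hγ : 0 < γ)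
    {h₀ : Fin N → Option Bool} (hgh₀ : PSub g h₀) (hd₀ : (pdom h₀ \ pdom g).card ≤ m)
    (hstart : c + γ ≤ extAvg P x h₀) (j : ℕ)
    (hlt : ∀ h, PSub g h → (pdom h \ pdom g).card ≤ m * j → minExtAvg m P x h < c) :
    ∃ h, PSub g h ∧ (pdom h \ pdom g).card ≤ m * (j + 1) ∧
      c + γ * (1 + ((2 : ℝ) ^ m)⁻¹) ^ j ≤ extAvg P x h := by
  induction j with
  | zero => exact ⟨h₀, hgh₀, by simpa using hd₀, by simpa using hstart⟩
  | succ j ih =>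
    obtain ⟨h, hgh, hd, hval⟩ :=
      ih fun h' hgh' hd' => hlt h' hgh' (hd'.trans (Nat.mul_le_mul_left m j.le_succ))
    have hcv : c < extAvg P x h := by
      have : 0 < γ * (1 + ((2 : ℝ) ^ m)⁻¹) ^ j := by positivity
      linarith
    obtain ⟨h', hhh', hd', hval'⟩ := exists_extAvg_ge_of_minExtAvg_lt hc hcv (hlt h hgh hd)
    refine ⟨h', hgh.trans hhh', ?_, ?_⟩
    · calc (pdom h' \ pdom g).card ≤ (pdom h' \ pdom h).card + (pdom h \ pdom g).card :=
            card_sdiff_pdom_le_add hgh hhh'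
        _ ≤ m + m * (j + 1) := Nat.add_le_add hd' hd
        _ = m * (j + 1 + 1) := by ring
    · calc c + γ * (1 + ((2 : ℝ) ^ m)⁻¹) ^ (j + 1)
          = c + γ * (1 + ((2 : ℝ) ^ m)⁻¹) ^ j * (1 + ((2 : ℝ) ^ m)⁻¹) := by ring
        _ ≤ c + (extAvg P x h - c) * (1 + ((2 : ℝ) ^ m)⁻¹) := by gcongr; linarith
        _ ≤ extAvg P x h' := hval'

lemma exists_le_minExtAvg (hx : ∀ f ∈ P, x f ≤ 1) {c γ : ℝ} (hc : 0 ≤ c) (hγ : 0 < γ)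
    {M : ℕ} (hM : (2 : ℝ) ^ m ≤ γ * M) {h₀ : Fin N → Option Bool} (hgh₀ : PSub g h₀)
    (hd₀ : (pdom h₀ \ pdom g).card ≤ m) (hstart : c + γ ≤ extAvg P x h₀) :
    ∃ h, PSub g h ∧ (pdom h \ pdom g).card ≤ m * M ∧ c ≤ minExtAvg m P x h := by
  by_contra! hlt
  obtain ⟨h, -, -, hval⟩ :=
    exists_extAvg_ge_pow_of_forall_minExtAvg_lt hc hγ hgh₀ hd₀ hstart M hlt
  set q : ℝ := ((2 : ℝ) ^ m)⁻¹
  have hq : 0 ≤ q := by positivity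
  have hMq : 1 ≤ γ * (M * q) := by
    rw [← mul_assoc, ← div_eq_mul_inv, one_le_div (by positivity)]
    exact hM
  have hbernoulli : 1 + M * q ≤ (1 + q) ^ M := one_add_mul_le_pow (by linarith) M
  have := extAvg_le_one hx (h := h)
  nlinarith [mul_le_mul_of_nonneg_left hbernoulli hγ.le]

lemma exists_split_minExtAvg {r r₀ r₁ : (Fin N → Bool) → ℝ}
    (hr₁ : ∀ f ∈ P, r₁ f ∈ Set.Icc (0 : ℝ) 1) (hsum : ∀ f ∈ P, r f ≤ r₀ f + r₁ f)
    {ε : ℝ} (hε : 0 < ε) (ha : ε ≤ minExtAvg m P r g) {M : ℕ}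
    (hM : (2 : ℝ) ^ m ≤ ε ^ 2 * M) :
    ∃ c₀ c₁ : ℝ, ∃ h₀ h₁ : Fin N → Option Bool,
      PSub g h₀ ∧ (pdom h₀ \ pdom g).card ≤ m * M ∧
      PSub g h₁ ∧ (pdom h₁ \ pdom g).card ≤ m * M ∧
      c₀ + c₁ = (1 - ε) * minExtAvg m P r g ∧
      c₀ ≤ minExtAvg m P r₀ h₀ ∧ c₁ ≤ minExtAvg m P r₁ h₁ := by
  set a := minExtAvg m P r g
  obtain ⟨h₀, hh₀, hmax⟩ := Finset.exists_max_image
    ({h | PSub g h ∧ (pdom h \ pdom g).card ≤ m * M} : Finset (Fin N → Option Bool))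
    (minExtAvg m P r₀) ⟨g, by simpa using PSub.refl g⟩
  obtain ⟨hgh₀, hd₀⟩ : PSub g h₀ ∧ (pdom h₀ \ pdom g).card ≤ m * M := by simpa using hh₀
  obtain hG | hG := le_or_gt ((1 - ε) * a) (minExtAvg m P r₀ h₀)
  · exact ⟨(1 - ε) * a, 0, h₀, g, hgh₀, hd₀, PSub.refl g, by simp, by ring, hG,
      minExtAvg_nonneg fun f hf => (hr₁ f hf).1⟩
  obtain ⟨h, hgh, hd, heq⟩ := exists_minExtAvg_eq m P r₀ g
  have hstart : ((1 - ε) * a - minExtAvg m P r₀ h₀) + ε * a ≤ extAvg P r₁ h := by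
    have hr : a ≤ extAvg P r h := minExtAvg_le hgh hd
    have hsplit : extAvg P r h ≤ extAvg P r₀ h + extAvg P r₁ h :=
      (extAvg_mono hsum).trans_eq extAvg_add
    have hr₀h : extAvg P r₀ h ≤ minExtAvg m P r₀ h₀ :=
      heq ▸ hmax g (by simpa using PSub.refl g)
    linarith
  have hM' : (2 : ℝ) ^ m ≤ ε * a * M := hM.trans (by rw [sq]; gcongr)
  obtain ⟨h₁, hgh₁, hd₁, hc₁⟩ := exists_le_minExtAvg (fun f hf => (hr₁ f hf).2)
    (by linarith) (mul_pos hε (hε.trans_le ha)) hM' hgh hd hstart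
  exact ⟨minExtAvg m P r₀ h₀, (1 - ε) * a - minExtAvg m P r₀ h₀, h₀, h₁,
    hgh₀, hd₀, hgh₁, hd₁, by ring, le_rfl, hc₁⟩

end Splitting

lemma logb_two_one_add_le {δ : ℝ} (hδ : 0 ≤ δ) : Real.logb 2 (1 + δ) ≤ 2 * δ := by
  rw [Real.logb, div_le_iff₀ (Real.log_pos one_lt_two)]
  have := Real.log_le_sub_one_of_pos (by linarith : (0 : ℝ) < 1 + δ)
  have := Real.log_two_gt_d9
  nlinarith

lemma two_pow_mul_le_div_logb (k : ℕ) :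
    (2 : ℝ) ^ (k + 3) * (2 ^ 2 ^ (k + 1) * 2 ^ 2 ^ (k + 3)) ≤
      (2 : ℝ) ^ (2 * k + 7) / Real.logb 2 (1 + ((2 : ℝ) ^ (2 ^ (2 * k + 7)))⁻¹) := by
  set δ : ℝ := ((2 : ℝ) ^ (2 ^ (2 * k + 7)))⁻¹
  have hδ : 0 < δ := by positivity
  have hexp : k + 3 + (2 ^ (k + 1) + 2 ^ (k + 3)) ≤ 2 * k + 6 + 2 ^ (2 * k + 7) := by
    have := Nat.pow_le_pow_right two_pos (by omega : k + 1 ≤ 2 * k + 6)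
    have := Nat.pow_le_pow_right two_pos (by omega : k + 3 ≤ 2 * k + 6)
    rw [pow_succ 2 (2 * k + 6)]
    omega
  calc (2 : ℝ) ^ (k + 3) * (2 ^ 2 ^ (k + 1) * 2 ^ 2 ^ (k + 3))
      = 2 ^ (k + 3 + (2 ^ (k + 1) + 2 ^ (k + 3))) := by rw [← pow_add, ← pow_add]
    _ ≤ 2 ^ (2 * k + 6 + 2 ^ (2 * k + 7)) := pow_le_pow_right₀ one_le_two hexp
    _ = (2 : ℝ) ^ (2 * k + 7) / (2 * δ) := by
        rw [eq_div_iff (by positivity), pow_add,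
          show (2 : ℝ) ^ (2 * k + 7) = 2 ^ (2 * k + 6) * 2 from pow_succ _ _]
        simp only [δ]
        field_simp
    _ ≤ (2 : ℝ) ^ (2 * k + 7) / Real.logb 2 (1 + δ) := by
        gcongr
        · exact Real.logb_pos one_lt_two (by linarith)
        · exact logb_two_one_add_le hδ.le

section Creatures

open Classical

variable {k N : ℕ} {φ : ℕ → ℕ}

lemma card_pdom_le_of_phiCond (hφ : PhiCond k φ) (t : Creature k N φ)
    {h : Fin N → Option Bool} (hh : PSub t.g h)
    (hd : (pdom h \ pdom t.g).card ≤ 2 ^ (k + 3) * (2 ^ 2 ^ (k + 1) * 2 ^ 2 ^ (k + 3))) :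
    (pdom h).card ≤ φ (k - t.n + 1) := by
  have hcard : (pdom h).card = (pdom h \ pdom t.g).card + (pdom t.g).card :=
    (Finset.card_sdiff_add_card_eq_card hh.pdom_subset).symm
  have hd' : ((pdom h \ pdom t.g).card : ℝ) ≤
      (2 : ℝ) ^ (k + 3) * (2 ^ 2 ^ (k + 1) * 2 ^ 2 ^ (k + 3)) := by exact_mod_cast hd
  have hg : ((pdom t.g).card : ℝ) ≤ φ (k - t.n) := by exact_mod_cast t.g_card
  have hφstep := hφ.2 (k - t.n)
  have := two_pow_mul_le_div_logb k
  have : (0 : ℝ) ≤ 2 ^ 2 ^ (k + 3) := by positivity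
  have : ((pdom h).card : ℝ) < φ (k - t.n + 1) := by
    rw [hcard, Nat.cast_add]
    linarith
  exact_mod_cast this.le

lemma exists_sigmaRel_le_fstar (hφ : PhiCond k φ) (t : Creature k N φ) (hn : 1 ≤ t.n)
    {x : (Fin N → Bool) → ℝ} (hx : ∀ f ∈ t.P, 0 ≤ x f) {h : Fin N → Option Bool}
    (hh : PSub t.g h)
    (hd : (pdom h \ pdom t.g).card ≤ 2 ^ (k + 3) * (2 ^ 2 ^ (k + 1) * 2 ^ 2 ^ (k + 3)))
    {c : ℝ} (hc : c ≤ minExtAvg (2 ^ (k + 3)) t.P x h) :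
    ∃ s : Creature k N φ, SigmaRel s t ∧
      (0 < c → t.n - 1 ≤ s.n ∧ (∀ f ∈ s.P, 0 < x f) ∧ c ≤ Fstar s x) := by
  by_cases hc₀ : 0 < c
  swap
  · exact ⟨t, ⟨le_rfl, PSub.refl _, subset_rfl⟩, fun h => absurd h hc₀⟩
  set Q := t.P.filter fun f => PSubF h f ∧ 0 < x f
  have hQ : ∀ h', PSub h h' → extAvg Q x h' = extAvg t.P x h' := fun h' hhh' =>
    extAvg_filter (q := fun f => PSubF h f ∧ 0 < x f) fun f hf hh'f hnq =>
      le_antisymm (not_lt.1 fun hpos => hnq ⟨hhh'.psubF hh'f, hpos⟩) (hx f hf)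
  have hQne : Q.Nonempty := by
    rw [Finset.nonempty_iff_ne_empty]
    intro hQe
    have := hc.trans
      ((minExtAvg_le (PSub.refl h) (by simp)).trans_eq (hQ h (PSub.refl h)).symm)
    simp [hQe, extAvg] at this
    linarith
  have hk : k - (t.n - 1) = k - t.n + 1 := by have := t.n_le; omega
  let s : Creature k N φ :=
    ⟨t.n - 1, h, Q, (Nat.sub_le _ _).trans t.n_le,
      by rw [hk]; exact card_pdom_le_of_phiCond hφ t hh hd, hQne,
      fun f hf => (Finset.mem_filter.1 hf).2.1⟩
  refine ⟨s, ⟨Nat.sub_le _ _, hh, Finset.filter_subset _ _⟩,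
    fun _ => ⟨le_rfl, fun f hf => (Finset.mem_filter.1 hf).2.2, ?_⟩⟩
  rw [fstar_eq_minExtAvg]
  exact hc.trans_eq (minExtAvg_congr hQ).symm

lemma fstar_split (hφ : PhiCond k φ) (t : Creature k N φ) (hn : 1 ≤ t.n)
    {r r₀ r₁ : (Fin N → Bool) → ℝ} (hr₀ : ∀ f ∈ t.P, 0 ≤ r₀ f)
    (hr₁ : ∀ f ∈ t.P, r₁ f ∈ Set.Icc (0 : ℝ) 1) (hsum : ∀ f ∈ t.P, r f ≤ r₀ f + r₁ f)
    (ha : ((2 : ℝ) ^ (2 ^ k))⁻¹ ≤ Fstar t r) :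
    ∃ c₀ c₁ : ℝ, ∃ s₀ s₁ : Creature k N φ,
      SigmaRel s₀ t ∧ SigmaRel s₁ t ∧
      c₀ + c₁ = (1 - ((2 : ℝ) ^ (2 ^ k))⁻¹) * Fstar t r ∧
      (0 < c₀ → t.n - 1 ≤ s₀.n ∧ (∀ f ∈ s₀.P, 0 < r₀ f) ∧ c₀ ≤ Fstar s₀ r₀) ∧
      (0 < c₁ → t.n - 1 ≤ s₁.n ∧ (∀ f ∈ s₁.P, 0 < r₁ f) ∧ c₁ ≤ Fstar s₁ r₁) := by
  -- `M` is chosen so that `ε² M = 2^(2^(k+3))` for `ε = 2^(-2^k)`.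
  have hM : (2 : ℝ) ^ 2 ^ (k + 3) ≤
      ((2 : ℝ) ^ (2 ^ k))⁻¹ ^ 2 * ((2 ^ 2 ^ (k + 1) * 2 ^ 2 ^ (k + 3) : ℕ) : ℝ) := by
    rw [pow_succ 2 k, pow_mul]
    push_cast
    field_simp
    rfl
  obtain ⟨c₀, c₁, h₀, h₁, hgh₀, hd₀, hgh₁, hd₁, hc, hc₀, hc₁⟩ :=
    exists_split_minExtAvg hr₁ hsum (by positivity) ha hM
  obtain ⟨s₀, hs₀, hs₀c⟩ := exists_sigmaRel_le_fstar hφ t hn hr₀ hgh₀ hd₀ hc₀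
  obtain ⟨s₁, hs₁, hs₁c⟩ :=
    exists_sigmaRel_le_fstar hφ t hn (fun f hf => (hr₁ f hf).1) hgh₁ hd₁ hc₁
  exact ⟨c₀, c₁, s₀, s₁, hs₀, hs₁, hc, hs₀c, hs₁c⟩

end Creatures

/-- the `k`-creature averaging functions `F*` are nice:
monotonicity (α), homogeneity (γ), upper semicontinuity-type approximation (δ),
and the splitting property (β). -/
theorem fstar_is_nice
    (k : ℕ) (φ : ℕ → ℕ) (hφ : PhiCond k φ) (t : Creature k (Nval k φ) φ) :
    (∀ r r' : (Fin (Nval k φ) → Bool) → ℝ,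
      (∀ f ∈ t.P, r f ∈ Set.Icc (0 : ℝ) 1) → (∀ f ∈ t.P, r' f ∈ Set.Icc (0 : ℝ) 1) →
      (∀ f ∈ t.P, r f ≤ r' f) → Fstar t r ≤ Fstar t r') ∧
    (∀ b : ℝ, b ∈ Set.Icc (0 : ℝ) 1 →
      ∀ r : (Fin (Nval k φ) → Bool) → ℝ, (∀ f ∈ t.P, r f ∈ Set.Icc (0 : ℝ) 1) →
      Fstar t (fun f => b * r f) = b * Fstar t r) ∧
    (∀ r : (Fin (Nval k φ) → Bool) → ℝ, (∀ f ∈ t.P, r f ∈ Set.Icc (0 : ℝ) 1) →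
      ∀ ε : ℝ, 0 < ε →
      ∃ r' : (Fin (Nval k φ) → Bool) → ℝ, (∀ f ∈ t.P, r f < r' f) ∧
        ∀ r'' : (Fin (Nval k φ) → Bool) → ℝ,
          (∀ f ∈ t.P, r'' f ∈ Set.Icc (0 : ℝ) 1) →
          (∀ f ∈ t.P, r f ≤ r'' f ∧ r'' f < r' f) →
          Fstar t r'' < Fstar t r + ε) ∧
    (2 ≤ t.n →
      ∀ r r0 r1 : (Fin (Nval k φ) → Bool) → ℝ,
      (∀ f ∈ t.P, r f ∈ Set.Icc (0 : ℝ) 1 ∧ r0 f ∈ Set.Icc (0 : ℝ) 1 ∧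
        r1 f ∈ Set.Icc (0 : ℝ) 1) →
      (∀ f ∈ t.P, r f ≤ r0 f + r1 f) →
      ((2 : ℝ) ^ (2 ^ k))⁻¹ ≤ Fstar t r →
      ∃ c0 c1 : ℝ, ∃ s0 s1 : Creature k (Nval k φ) φ,
        SigmaRel s0 t ∧ SigmaRel s1 t ∧
        c0 + c1 = (1 - ((2 : ℝ) ^ (2 ^ k))⁻¹) * Fstar t r ∧
        (0 < c0 → t.n - 1 ≤ s0.n ∧ (∀ f ∈ s0.P, 0 < r0 f) ∧ c0 ≤ Fstar s0 r0) ∧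
        (0 < c1 → t.n - 1 ≤ s1.n ∧ (∀ f ∈ s1.P, 0 < r1 f) ∧ c1 ≤ Fstar s1 r1)) := by
  refine ⟨fun r r' _ _ hle => minExtAvg_mono hle, fun b hb r _ => minExtAvg_const_mul hb.1,
    fun r _ ε hε => ?_, fun hn r r₀ r₁ hr hsum ha => ?_⟩
  · obtain ⟨r', hr', H⟩ := exists_forall_minExtAvg_lt_add (2 ^ (k + 3)) t.P r t.g hε
    exact ⟨r', hr', fun r'' _ hr'' => H r'' hr''⟩
  · exact fstar_split hφ t (by omega) (fun f hf => (hr f hf).2.1.1)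
      (fun f hf => (hr f hf).2.2) hsum ha

end MeasuredCreatures
end

section
/- Let p ∈ Q^mt_∅(K,Σ,F) (i.e. p ∈ Q^tree_∅(K,Σ) with μ^F(p) > 0) and let 0 < ε < 1. Then there is a node η ∈ T^p such that μ^F_p(η) ≥ 1 − ε. -/
/-!
Suppose every node had μ-value below `c = 1 - ε`. Above each node of an antichain front `C`
of `p` there is then an antichain front of value at most `c`; gluing them gives a front at the
root whose value is, by monotonicity (α) and homogeneity (γ) of the `F_t`, at most `c` times
that of `C`. Iterating, the root has fronts of value at most `c ^ k` for every `k`, so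
`μ^F(p) = 0`.

The recursion defining `μ^f_{p,A}` is well founded when `A` is an antichain: no member of `A`
lies below a node of `T[p,A] ∖ A`, so an infinite descent through `T[p,A] ∖ A` would be a
branch missing `A`. On an arbitrary front a solution of the recursion can take junk values; but
every front contains the antichain of its `⊴`-minimal elements, and restricting to it shows that
the values whose infimum is `μ^F_p(η)` lie in `[0, 1]`.
-/

namespace MeasuredTrees

/-- `η` is a valid node for `H`: a finite sequence with `η i ∈ H i` for all `i < lh η`. -/
def ValidNode (H : ℕ → Finset ℕ) (η : List ℕ) : Prop :=
  ∀ (i : ℕ) (h : i < η.length), η.get ⟨i, h⟩ ∈ H i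

/-- A local tree-creature for `H`: a node `η_t`, a nonnegative norm, and a nonempty set
`pos(t)` of nodes of length `lh(η_t)+1` properly extending `η_t`. -/
structure TCreature (H : ℕ → Finset ℕ) where
  node : List ℕ
  node_ok : ValidNode H node
  nor : ℝ
  nor_nonneg : 0 ≤ nor
  pos : Finset (List ℕ)
  pos_ne : pos.Nonempty
  pos_ok : ∀ ν ∈ pos, node <+: ν ∧ ν.length = node.length + 1 ∧ ValidNode H ν

/-- A measured tree creating triple `(K, Σ, F)` for `H` (data part). -/
structure MTriple (H : ℕ → Finset ℕ) where
  K : Set (TCreature H)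
  Sig : TCreature H → Set (TCreature H)
  F : TCreature H → (List ℕ → ℝ) → ℝ

variable {H : ℕ → Finset ℕ}

/-- The structural requirements: `(K,Σ)` is a strongly finitary local tree-creating
pair, each `H m` has at least two elements, and each `F t` is a map
`[0,1]^{pos t} → [0,1]` (represented on total functions, depending only on the
values on `pos t`). -/
structure MTriple.Good (T : MTriple H) : Prop where
  H_two : ∀ m : ℕ, 2 ≤ (H m).card
  sig_mem : ∀ t ∈ T.K, T.Sig t ⊆ T.K
  sig_node : ∀ t s : TCreature H, s ∈ T.Sig t → s.node = t.node
  sig_pos : ∀ t s : TCreature H, s ∈ T.Sig t → s.pos ⊆ t.pos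
  sig_trans : ∀ t s : TCreature H, s ∈ T.Sig t → T.Sig s ⊆ T.Sig t
  finitary : ∀ η : List ℕ, {t : TCreature H | t ∈ T.K ∧ t.node = η}.Finite
  F_congr : ∀ (t : TCreature H) (r r' : List ℕ → ℝ),
    (∀ ν ∈ t.pos, r ν = r' ν) → T.F t r = T.F t r'
  F_mem : ∀ (t : TCreature H) (r : List ℕ → ℝ),
    (∀ ν ∈ t.pos, r ν ∈ Set.Icc (0 : ℝ) 1) → T.F t r ∈ Set.Icc (0 : ℝ) 1

/-- The triple is nice: monotonicity (α), splitting (β), homogeneity (γ) and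
approximation (δ). -/
structure MTriple.Nice (T : MTriple H) : Prop where
  mono : ∀ t ∈ T.K, ∀ r r' : List ℕ → ℝ,
    (∀ ν ∈ t.pos, r ν ∈ Set.Icc (0 : ℝ) 1) → (∀ ν ∈ t.pos, r' ν ∈ Set.Icc (0 : ℝ) 1) →
    (∀ ν ∈ t.pos, r ν ≤ r' ν) → T.F t r ≤ T.F t r'
  split : ∀ t ∈ T.K, 1 < t.nor →
    ∀ r r0 r1 : List ℕ → ℝ,
    (∀ ν ∈ t.pos, r ν ∈ Set.Icc (0 : ℝ) 1 ∧ r0 ν ∈ Set.Icc (0 : ℝ) 1 ∧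
      r1 ν ∈ Set.Icc (0 : ℝ) 1) →
    (∀ ν ∈ t.pos, r ν ≤ r0 ν + r1 ν) →
    ((2 : ℝ) ^ (2 ^ t.node.length))⁻¹ ≤ T.F t r →
    ∃ c0 c1 : ℝ, ∃ s0 s1 : TCreature H, s0 ∈ T.Sig t ∧ s1 ∈ T.Sig t ∧
      c0 + c1 = (1 - ((2 : ℝ) ^ (2 ^ t.node.length))⁻¹) * T.F t r ∧
      (0 < c0 → t.nor - 1 ≤ s0.nor ∧ (∀ ν ∈ s0.pos, 0 < r0 ν) ∧ c0 ≤ T.F s0 r0) ∧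
      (0 < c1 → t.nor - 1 ≤ s1.nor ∧ (∀ ν ∈ s1.pos, 0 < r1 ν) ∧ c1 ≤ T.F s1 r1)
  scale : ∀ t ∈ T.K, ∀ b : ℝ, b ∈ Set.Icc (0 : ℝ) 1 →
    ∀ r : List ℕ → ℝ, (∀ ν ∈ t.pos, r ν ∈ Set.Icc (0 : ℝ) 1) →
    T.F t (fun ν => b * r ν) = b * T.F t r
  approx : ∀ t ∈ T.K, ∀ r : List ℕ → ℝ, (∀ ν ∈ t.pos, r ν ∈ Set.Icc (0 : ℝ) 1) →
    ∀ ε : ℝ, 0 < ε →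
    ∃ r' : List ℕ → ℝ, (∀ ν ∈ t.pos, r ν < r' ν) ∧
      ∀ r'' : List ℕ → ℝ, (∀ ν ∈ t.pos, r'' ν ∈ Set.Icc (0 : ℝ) 1) →
        (∀ ν ∈ t.pos, r ν ≤ r'' ν ∧ r'' ν < r' ν) → T.F t r'' < T.F t r + ε

/-- A condition of `Q^tree_∅(K,Σ)`: a tree of nodes with no maximal elements,
together with a creature of `K` at every node whose possibilities are exactly the
successors in the tree. -/
structure Cond (T : MTriple H) where
  tree : Set (List ℕ)
  root : List ℕ
  root_mem : root ∈ tree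
  root_le : ∀ η ∈ tree, root <+: η
  closed : ∀ η ∈ tree, ∀ ν : List ℕ, root <+: ν → ν <+: η → ν ∈ tree
  c : List ℕ → TCreature H
  c_mem : ∀ η ∈ tree, c η ∈ T.K
  c_node : ∀ η ∈ tree, (c η).node = η
  succ_eq : ∀ η ∈ tree, ∀ ν : List ℕ,
    ((ν ∈ tree ∧ η <+: ν ∧ ν.length = η.length + 1) ↔ ν ∈ (c η).pos)

variable {T : MTriple H}

/-- The initial segment of length `n` of an infinite sequence. -/
def initSeg (x : ℕ → ℕ) (n : ℕ) : List ℕ := (List.range n).map x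

/-- `x` is an ω-branch of the tree of `p` through the node `η`. -/
def IsBranchAt (p : Cond T) (η : List ℕ) (x : ℕ → ℕ) : Prop :=
  initSeg x η.length = η ∧ ∀ n : ℕ, η.length ≤ n → initSeg x n ∈ p.tree

/-- `A` is a front of the tree of `p^{[η]}`: a set of nodes of the tree extending `η`
met by every ω-branch through `η`. -/
def IsFrontAt (p : Cond T) (η : List ℕ) (A : Set (List ℕ)) : Prop :=
  (∀ ρ ∈ A, ρ ∈ p.tree ∧ η <+: ρ) ∧
  ∀ x : ℕ → ℕ, IsBranchAt p η x → ∃ n : ℕ, initSeg x n ∈ A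

/-- `ρ ∈ T[p^{[η]}, A]`, i.e. `ρ` is a node of the tree of `p` extending `η` and lying
(weakly) below some member of `A`. -/
def InCone (p : Cond T) (η : List ℕ) (A : Set (List ℕ)) (ρ : List ℕ) : Prop :=
  ρ ∈ p.tree ∧ η <+: ρ ∧ ∃ ν ∈ A, ρ <+: ν

/-- `m` is the function `μ^f_{p^{[η]},A}` (extended by `0` off `T[p^{[η]},A]`):
it equals `f` on `A` and satisfies the downward recursion
`m ρ = F_{t^p_ρ}(m ν : ν ∈ pos(t^p_ρ))` on `T[p^{[η]},A] ∖ A`. -/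
def IsMuAt (p : Cond T) (η : List ℕ) (A : Set (List ℕ))
    (f : List ℕ → ℝ) (m : List ℕ → ℝ) : Prop :=
  (∀ ρ ∈ A, m ρ = f ρ) ∧
  (∀ ρ : List ℕ, InCone p η A ρ → ρ ∉ A → m ρ = T.F (p.c ρ) m) ∧
  (∀ ρ : List ℕ, ¬ InCone p η A ρ → m ρ = 0)

/-- `μ^F_p(η)`: the infimum over fronts `A` of `p^{[η]}` of `μ^{1_A}_{p^{[η]},A}(η)`. -/
noncomputable def muAt (p : Cond T) (η : List ℕ) : ℝ :=
  sInf {x : ℝ | ∃ (A : Set (List ℕ)) (m : List ℕ → ℝ),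
    IsFrontAt p η A ∧ IsMuAt p η A (fun _ => 1) m ∧ x = m η}

/-- `μ^F(p) = μ^F_p(root p)`. -/
noncomputable def muF (p : Cond T) : ℝ := muAt p p.root

/-- The norm condition (c)₄ defining `Q^tree_4(K,Σ)` : for every `n` the set of nodes
above which all norms are at least `n` contains a front. -/
def Qtree4 (p : Cond T) : Prop :=
  ∀ n : ℕ, ∃ A : Set (List ℕ), IsFrontAt p p.root A ∧
    ∀ ν ∈ A, ∀ ρ ∈ p.tree, ν <+: ρ → (n : ℝ) ≤ (p.c ρ).nor

/-- The order on conditions: `p ≤ q` iff the tree of `q` is contained in that of `p`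
and each creature of `q` belongs to `Σ` of the corresponding creature of `p`. -/
def CondLe (p q : Cond T) : Prop :=
  q.tree ⊆ p.tree ∧ ∀ η ∈ q.tree, q.c η ∈ T.Sig (p.c η)

/-- `p` is normal: `μ^F_p(η) > 0` for every node `η` of the tree of `p`. -/
def Normal (p : Cond T) : Prop := ∀ η ∈ p.tree, 0 < muAt p η

/-- `p` is special: `μ^F_p(η) ≥ 2^(−2^(lh η + 1))` for every node `η`. -/
def Special (p : Cond T) : Prop :=
  ∀ η ∈ p.tree, ((2 : ℝ) ^ (2 ^ (η.length + 1)))⁻¹ ≤ muAt p η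

section Lists

variable {α : Type*} {a b l l₁ l₂ : List α} {A : Set (List α)}

theorem _root_.IsAntichain.eq_of_prefix_of_prefix (hA : IsAntichain (· <+: ·) A) (ha : a ∈ A)
    (hb : b ∈ A) (h₁ : a <+: l) (h₂ : l <+: b) : l = b :=
  antisymm h₂ (hA.eq ha hb (h₁.trans h₂) ▸ h₁)

theorem _root_.IsAntichain.eq_of_prefix_common (hA : IsAntichain (· <+: ·) A) (ha : a ∈ A)
    (hb : b ∈ A) (h₁ : a <+: l) (h₂ : b <+: l) : a = b :=
  (List.prefix_or_prefix_of_prefix h₁ h₂).elim (hA.eq ha hb) fun h => (hA.eq hb ha h).symm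

theorem _root_.List.IsPrefix.prefix_or_eq_of_length_eq_succ (h₁ : l₁ <+: l) (h₂ : l₂ <+: l)
    (hl : l.length = l₂.length + 1) : l₁ <+: l₂ ∨ l₁ = l := by
  rcases le_or_gt l₁.length l₂.length with h | h
  · exact .inl (List.prefix_of_prefix_length_le h₁ h₂ h)
  · exact .inr (h₁.eq_of_length (by have := h₁.length_le; omega))

def prefixMinimals (A : Set (List α)) : Set (List α) :=
  {a ∈ A | ∀ b ∈ A, b <+: a → b = a}

theorem isAntichain_prefixMinimals (A : Set (List α)) :
    IsAntichain (· <+: ·) (prefixMinimals A) :=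
  fun a ha _ hb hne hab => hne (hb.2 a ha.1 hab)

theorem exists_prefixMinimals_prefix (ha : a ∈ A) : ∃ b ∈ prefixMinimals A, b <+: a := by
  obtain ⟨b, ⟨hb, hba⟩, hmin⟩ :=
    (measure List.length).wf.has_min {b | b ∈ A ∧ b <+: a} ⟨a, ha, List.prefix_rfl⟩
  refine ⟨b, ⟨hb, fun c hc hcb => hcb.eq_of_length ?_⟩, hba⟩
  exact le_antisymm hcb.length_le (not_lt.1 (hmin c ⟨hc, hcb.trans hba⟩))

end Lists

section InitSeg

variable {x : ℕ → ℕ} {l : List ℕ} {m n : ℕ}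

theorem initSeg_length (x : ℕ → ℕ) (n : ℕ) : (initSeg x n).length = n := by
  simp [initSeg]

theorem initSeg_take (x : ℕ → ℕ) (h : m ≤ n) : (initSeg x n).take m = initSeg x m := by
  simp [initSeg, ← List.map_take, List.take_range, Nat.min_eq_left h]

theorem initSeg_prefix (x : ℕ → ℕ) (h : m ≤ n) : initSeg x m <+: initSeg x n :=
  initSeg_take x h ▸ List.take_prefix _ _

theorem initSeg_length_eq_of_prefix (h : l <+: initSeg x n) : initSeg x l.length = l := by
  rw [← initSeg_take x (by simpa [initSeg_length] using h.length_le),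
    ← List.prefix_iff_eq_take.1 h]

theorem exists_initSeg_eq {g : ℕ → List ℕ} (hg : ∀ k, g k <+: g (k + 1))
    (hlen : ∀ k, (g k).length = (g 0).length + k) :
    ∃ x : ℕ → ℕ, ∀ k, initSeg x ((g 0).length + k) = g k := by
  have mono : ∀ j k, j ≤ k → g j <+: g k := fun j k hjk => by
    induction k, hjk using Nat.le_induction with
    | base => exact List.prefix_rfl
    | succ k _ ih => exact ih.trans (hg k)
  have agree : ∀ j k i (hj : i < (g j).length) (hk : i < (g k).length), (g j)[i] = (g k)[i] := by
    intro j k i hj hk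
    rcases le_total j k with h | h
    · exact (mono j k h).getElem hj
    · exact ((mono k j h).getElem hk).symm
  refine ⟨fun i => (g (i + 1)).getD i 0, fun k =>
    List.ext_getElem (by rw [initSeg_length, hlen k]) fun i _ hk => ?_⟩
  have hi : i < (g (i + 1)).length := by rw [hlen]; omega
  simp [initSeg, List.getD_eq_getElem?_getD, hi, agree (i + 1) k i hi hk]

end InitSeg

section Fronts

variable {p : Cond T} {η ρ σ τ ζ b l : List ℕ} {A B : Set (List ℕ)}

theorem exists_isBranchAt (hη : η ∈ p.tree) {g : ℕ → List ℕ} (hηg : η <+: g 0)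
    (hg : ∀ k, g k ∈ p.tree ∧ g (k + 1) ∈ (p.c (g k)).pos) :
    ∃ x, IsBranchAt p η x ∧ ∀ k, initSeg x ((g 0).length + k) = g k := by
  have hsucc k := (p.succ_eq _ (hg k).1 _).2 (hg k).2
  have hlen : ∀ k, (g k).length = (g 0).length + k := fun k => by
    induction k with
    | zero => rfl
    | succ k ih => rw [(hsucc k).2.2, ih]; rfl
  obtain ⟨x, hx⟩ := exists_initSeg_eq (fun k => (hsucc k).2.1) hlen
  have hx0 : initSeg x (g 0).length = g 0 := hx 0
  have htake : ∀ n ≤ (g 0).length, initSeg x n = (g 0).take n := fun n hn => by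
    rw [← initSeg_take x hn, hx0]
  have hxη : initSeg x η.length = η := by
    rw [htake _ hηg.length_le, ← List.prefix_iff_eq_take.1 hηg]
  refine ⟨x, ⟨hxη, fun n hn => ?_⟩, hx⟩
  rcases le_total (g 0).length n with h | h
  · obtain ⟨k, rfl⟩ := Nat.exists_eq_add_of_le h
    exact hx k ▸ (hg k).1
  · refine p.closed _ (hg 0).1 _ ((p.root_le η hη).trans ?_) ?_
    · exact hxη ▸ initSeg_prefix x hn
    · exact htake n h ▸ List.take_prefix _ _

theorem exists_succ_seq (hη : η ∈ p.tree) :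
    ∃ g : ℕ → List ℕ, g 0 = η ∧ ∀ k, g k ∈ p.tree ∧ g (k + 1) ∈ (p.c (g k)).pos := by
  let r : List ℕ → List ℕ → Prop := fun τ σ => σ ∈ p.tree ∧ τ ∈ (p.c σ).pos
  have hacc : ∀ σ, Acc r σ → σ ∉ p.tree := fun σ h => by
    induction h with
    | intro σ _ ih =>
      intro hσ
      obtain ⟨τ, hτ⟩ := (p.c σ).pos_ne
      exact ih τ ⟨hσ, hτ⟩ ((p.succ_eq σ hσ τ).2 hτ).1
  exact not_acc_iff_exists_descending_chain.1 fun h => hacc η h hη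

theorem IsFrontAt.inCone_of_mem (hA : IsFrontAt p η A) (ha : ρ ∈ A) : InCone p η A ρ :=
  ⟨(hA.1 ρ ha).1, (hA.1 ρ ha).2, ρ, ha, List.prefix_rfl⟩

theorem IsFrontAt.exists_mem (hη : η ∈ p.tree) (hA : IsFrontAt p η A) : ∃ a ∈ A, η <+: a := by
  obtain ⟨g, rfl, hg⟩ := exists_succ_seq hη
  obtain ⟨x, hx, -⟩ := exists_isBranchAt hη List.prefix_rfl hg
  obtain ⟨n, hn⟩ := hA.2 x hx
  exact ⟨_, hn, (hA.1 _ hn).2⟩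

theorem IsFrontAt.inCone_self (hη : η ∈ p.tree) (hA : IsFrontAt p η A) : InCone p η A η :=
  let ⟨a, ha, hηa⟩ := hA.exists_mem hη
  ⟨hη, List.prefix_rfl, a, ha, hηa⟩

theorem IsFrontAt.prefixMinimals (hA : IsFrontAt p η A) : IsFrontAt p η (prefixMinimals A) := by
  refine ⟨fun ρ hρ => hA.1 ρ hρ.1, fun x hx => ?_⟩
  obtain ⟨n, hn⟩ := hA.2 x hx
  obtain ⟨b, hb, hbx⟩ := exists_prefixMinimals_prefix hn
  exact ⟨b.length, (initSeg_length_eq_of_prefix hbx).symm ▸ hb⟩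

/-- A successor of `σ ∈ T[p, B] ∖ B` cannot lie strictly above a member of `B`: that member
would be a prefix of `σ`. -/
theorem inCone_of_mem_pos (hB : IsAntichain (· <+: ·) B) (hσ : InCone p ζ B σ) (hσB : σ ∉ B)
    (hτ : τ ∈ (p.c σ).pos) (hb : b ∈ B) (hτl : τ <+: l) (hbl : b <+: l) : InCone p ζ B τ := by
  obtain ⟨hσt, hζσ, a, ha, hσa⟩ := hσ
  obtain ⟨hτt, hστ, hlen⟩ := (p.succ_eq σ hσt τ).2 hτ
  refine ⟨hτt, hζσ.trans hστ, ?_⟩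
  rcases List.prefix_or_prefix_of_prefix hτl hbl with h | h
  · exact ⟨b, hb, h⟩
  rcases h.prefix_or_eq_of_length_eq_succ hστ hlen with h | rfl
  · exact absurd (hB.eq_of_prefix_of_prefix hb ha h hσa ▸ ha) hσB
  · exact ⟨b, hb, List.prefix_rfl⟩

def cone (p : Cond T) (η : List ℕ) (A : Set (List ℕ)) : Set (List ℕ) := {ρ | InCone p η A ρ}

theorem mem_cone : ρ ∈ cone p η A ↔ InCone p η A ρ := Iff.rfl

def ConeStep (p : Cond T) (η : List ℕ) (A : Set (List ℕ)) (τ σ : List ℕ) : Prop :=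
  InCone p η A σ ∧ σ ∉ A ∧ τ ∈ (p.c σ).pos

theorem wellFounded_coneStep (hη : η ∈ p.tree) (hA : IsFrontAt p η A)
    (hanti : IsAntichain (· <+: ·) A) : WellFounded (ConeStep p η A) := by
  refine wellFounded_iff_isEmpty_descending_chain.2 ⟨fun ⟨g, hg⟩ => ?_⟩
  obtain ⟨x, hx, hxg⟩ :=
    exists_isBranchAt hη (hg 0).1.2.1 fun k => ⟨(hg k).1.1, (hg k).2.2⟩
  obtain ⟨n, hn⟩ := hA.2 x hx
  rcases le_or_gt (g 0).length n with h | h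
  · obtain ⟨k, rfl⟩ := Nat.exists_eq_add_of_le h
    exact (hg k).2.1 (hxg k ▸ hn)
  · obtain ⟨-, -, a, ha, h0a⟩ := (hg 0).1
    have hn0 : initSeg x n <+: g 0 := hxg 0 ▸ initSeg_prefix x h.le
    exact (hg 0).2.1 (hanti.eq_of_prefix_of_prefix hn ha hn0 h0a ▸ ha)

theorem cone_induction (hη : η ∈ p.tree) (hA : IsFrontAt p η A)
    (hanti : IsAntichain (· <+: ·) A) {P : List ℕ → Prop}
    (hout : ∀ ρ, ¬InCone p η A ρ → P ρ) (base : ∀ a ∈ A, P a)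
    (step : ∀ σ, InCone p η A σ → σ ∉ A → (∀ τ ∈ (p.c σ).pos, P τ) → P σ) (ρ : List ℕ) :
    P ρ := by
  induction ρ using (wellFounded_coneStep hη hA hanti).induction with
  | _ σ ih =>
    by_cases hσ : InCone p η A σ
    · by_cases hσA : σ ∈ A
      · exact base σ hσA
      · exact step σ hσ hσA fun τ hτ => ih τ ⟨hσ, hσA, hτ⟩
    · exact hout σ hσ

end Fronts

section MuFunctions

variable {p : Cond T} {η ζ : List ℕ} {A B : Set (List ℕ)} {f f₁ f₂ g m m₁ m₂ : List ℕ → ℝ}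

theorem exists_isMuAt (hG : T.Good) (hη : η ∈ p.tree) (hA : IsFrontAt p η A)
    (hanti : IsAntichain (· <+: ·) A) (f : List ℕ → ℝ) : ∃ m, IsMuAt p η A f m := by
  classical
  have hwf := wellFounded_coneStep hη hA hanti
  let m : List ℕ → ℝ := hwf.fix fun σ ih =>
    if InCone p η A σ then
      if σ ∈ A then f σ else T.F (p.c σ) fun τ => if h : ConeStep p η A τ σ then ih τ h else 0
    else 0
  have hm : ∀ σ, m σ = if InCone p η A σ then
      if σ ∈ A then f σ else T.F (p.c σ) fun τ => if ConeStep p η A τ σ then m τ else 0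
    else 0 := hwf.fix_eq _
  refine ⟨m, fun ρ hρ => ?_, fun ρ hρ hρA => ?_, fun ρ hρ => by rw [hm, if_neg hρ]⟩
  · rw [hm, if_pos (hA.inCone_of_mem hρ), if_pos hρ]
  · rw [hm, if_pos hρ, if_neg hρA]
    exact hG.F_congr _ _ _ fun τ hτ => if_pos ⟨hρ, hρA, hτ⟩

theorem IsMuAt.mem_Icc (hG : T.Good) (hη : η ∈ p.tree) (hA : IsFrontAt p η A)
    (hanti : IsAntichain (· <+: ·) A) (hm : IsMuAt p η A f m)
    (hf : ∀ a ∈ A, f a ∈ Set.Icc (0 : ℝ) 1) (ρ : List ℕ) : m ρ ∈ Set.Icc (0 : ℝ) 1 := by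
  refine cone_induction (P := fun ρ => m ρ ∈ Set.Icc (0 : ℝ) 1) hη hA hanti
    (fun ρ hρ => ?_) (fun a ha => ?_) (fun σ hσ hσA ih => ?_) ρ
  · rw [hm.2.2 ρ hρ]; exact ⟨le_rfl, zero_le_one⟩
  · rw [hm.1 a ha]; exact hf a ha
  · rw [hm.2.1 σ hσ hσA]; exact hG.F_mem _ _ ih

theorem IsMuAt.le_of_le (hN : T.Nice) (hη : η ∈ p.tree) (hA : IsFrontAt p η A)
    (hanti : IsAntichain (· <+: ·) A) (hm₁ : IsMuAt p η A f₁ m₁) (hm₂ : IsMuAt p η A f₂ m₂)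
    (h₁ : ∀ ρ, m₁ ρ ∈ Set.Icc (0 : ℝ) 1) (h₂ : ∀ ρ, m₂ ρ ∈ Set.Icc (0 : ℝ) 1)
    (hf : ∀ a ∈ A, f₁ a ≤ f₂ a) (ρ : List ℕ) : m₁ ρ ≤ m₂ ρ := by
  refine cone_induction (P := fun ρ => m₁ ρ ≤ m₂ ρ) hη hA hanti
    (fun ρ hρ => ?_) (fun a ha => ?_) (fun σ hσ hσA ih => ?_) ρ
  · rw [hm₁.2.2 ρ hρ, hm₂.2.2 ρ hρ]
  · rw [hm₁.1 a ha, hm₂.1 a ha]; exact hf a ha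
  · rw [hm₁.2.1 σ hσ hσA, hm₂.2.1 σ hσ hσA]
    exact hN.mono _ (p.c_mem σ hσ.1) _ _ (fun τ _ => h₁ τ) (fun τ _ => h₂ τ) ih

theorem IsMuAt.const_mul (hN : T.Nice) {c : ℝ} (hc : c ∈ Set.Icc (0 : ℝ) 1)
    (hm : IsMuAt p η A f m) (hmI : ∀ ρ, m ρ ∈ Set.Icc (0 : ℝ) 1) :
    IsMuAt p η A (fun ρ => c * f ρ) (fun ρ => c * m ρ) := by
  refine ⟨fun a ha => ?_, fun σ hσ hσA => ?_, fun σ hσ => ?_⟩ <;> dsimp only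
  · rw [hm.1 a ha]
  · rw [hN.scale _ (p.c_mem σ hσ.1) c hc m fun τ _ => hmI τ, hm.2.1 σ hσ hσA]
  · rw [hm.2.2 σ hσ, mul_zero]

theorem IsMuAt.indicator (hG : T.Good) (hm : IsMuAt p η A f m) (hB : IsFrontAt p ζ B)
    (hmB : ∀ b ∈ B, m b = g b)
    (hsub : ∀ σ, InCone p ζ B σ → σ ∉ B → InCone p η A σ ∧ σ ∉ A)
    (hsucc : ∀ σ, InCone p ζ B σ → σ ∉ B →
      ∀ τ ∈ (p.c σ).pos, InCone p η A τ → InCone p ζ B τ) :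
    IsMuAt p ζ B g ((cone p ζ B).indicator m) := by
  obtain ⟨-, hrec, hzero⟩ := hm
  refine ⟨fun b hb => ?_, fun σ hσ hσB => ?_,
    fun σ hσ => Set.indicator_of_notMem (mem_cone.not.2 hσ) m⟩
  · rw [Set.indicator_of_mem (mem_cone.2 (hB.inCone_of_mem hb)), hmB b hb]
  · rw [Set.indicator_of_mem (mem_cone.2 hσ), hrec σ (hsub σ hσ hσB).1 (hsub σ hσ hσB).2]
    refine hG.F_congr _ _ _ fun τ hτ => ?_
    by_cases hτB : InCone p ζ B τ
    · rw [Set.indicator_of_mem (mem_cone.2 hτB)]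
    · rw [Set.indicator_of_notMem (mem_cone.not.2 hτB),
        hzero τ fun h => hτB (hsucc σ hσ hσB τ hτ h)]

theorem IsMuAt.prefixMinimals (hG : T.Good) (hA : IsFrontAt p η A) (hm : IsMuAt p η A f m) :
    IsMuAt p η (prefixMinimals A) f ((cone p η (prefixMinimals A)).indicator m) := by
  refine hm.indicator hG hA.prefixMinimals (fun b hb => hm.1 b hb.1)
    (fun σ hσ hσB => ⟨?_, fun hσA => ?_⟩) ?_
  · obtain ⟨hσt, hησ, a, ha, hσa⟩ := hσ
    exact ⟨hσt, hησ, a, ha.1, hσa⟩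
  · obtain ⟨-, -, a, ha, hσa⟩ := hσ
    exact hσB (ha.2 σ hσA hσa ▸ ha)
  · rintro σ hσ hσB τ hτ ⟨-, -, a, ha, hτa⟩
    obtain ⟨b, hb, hba⟩ := exists_prefixMinimals_prefix ha
    exact inCone_of_mem_pos (isAntichain_prefixMinimals A) hσ hσB hτ hb hτa hba

theorem exists_antichain_of_isMuAt (hG : T.Good) (hη : η ∈ p.tree) (hA : IsFrontAt p η A)
    (hm : IsMuAt p η A f m) : ∃ B m', IsFrontAt p η B ∧ IsAntichain (· <+: ·) B ∧
      IsMuAt p η B f m' ∧ m' η = m η :=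
  ⟨_, _, hA.prefixMinimals, isAntichain_prefixMinimals A, hm.prefixMinimals hG hA,
    Set.indicator_of_mem (mem_cone.2 (hA.prefixMinimals.inCone_self hη)) m⟩

def HasFrontLE (p : Cond T) (η : List ℕ) (y : ℝ) : Prop :=
  ∃ A m, IsFrontAt p η A ∧ IsAntichain (· <+: ·) A ∧ IsMuAt p η A (fun _ => 1) m ∧ m η ≤ y

theorem HasFrontLE.mono {y y' : ℝ} (h : HasFrontLE p η y) (hy : y ≤ y') : HasFrontLE p η y' :=
  let ⟨A, m, hA, hanti, hm, hle⟩ := h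
  ⟨A, m, hA, hanti, hm, hle.trans hy⟩

theorem hasFrontLE_one (hG : T.Good) (hη : η ∈ p.tree) : HasFrontLE p η 1 := by
  have hA : IsFrontAt p η {η} :=
    ⟨by rintro _ rfl; exact ⟨hη, List.prefix_rfl⟩, fun x hx => ⟨η.length, hx.1⟩⟩
  have hanti : IsAntichain (· <+: ·) ({η} : Set (List ℕ)) :=
    Set.subsingleton_singleton.isAntichain _
  obtain ⟨m, hm⟩ := exists_isMuAt hG hη hA hanti (fun _ => 1)
  exact ⟨{η}, m, hA, hanti, hm,
    (hm.mem_Icc hG hη hA hanti (fun _ _ => ⟨zero_le_one, le_rfl⟩) η).2⟩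

theorem IsMuAt.nonneg (hG : T.Good) (hη : η ∈ p.tree) (hA : IsFrontAt p η A)
    (hm : IsMuAt p η A (fun _ => 1) m) : 0 ≤ m η := by
  obtain ⟨B, m', hB, hanti, hm', hm'η⟩ := exists_antichain_of_isMuAt hG hη hA hm
  exact hm'η ▸ (hm'.mem_Icc hG hη hB hanti (fun _ _ => ⟨zero_le_one, le_rfl⟩) η).1

theorem muAt_le (hG : T.Good) (hη : η ∈ p.tree) (hA : IsFrontAt p η A)
    (hm : IsMuAt p η A (fun _ => 1) m) : muAt p η ≤ m η := by
  unfold muAt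
  exact csInf_le ⟨0, by rintro _ ⟨A, m, hA, hm, rfl⟩; exact hm.nonneg hG hη hA⟩ ⟨A, m, hA, hm, rfl⟩

theorem HasFrontLE.muAt_le (hG : T.Good) (hη : η ∈ p.tree) {y : ℝ} (h : HasFrontLE p η y) :
    muAt p η ≤ y :=
  let ⟨_, _, hA, _, hm, hle⟩ := h
  (MeasuredTrees.muAt_le hG hη hA hm).trans hle

theorem hasFrontLE_of_muAt_lt (hG : T.Good) (hη : η ∈ p.tree) {y : ℝ} (h : muAt p η < y) :
    HasFrontLE p η y := by
  obtain ⟨A, m, hA, -, hm, -⟩ := hasFrontLE_one hG hη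
  unfold muAt at h
  obtain ⟨_, ⟨A, m, hA, hm, rfl⟩, hlt⟩ := exists_lt_of_csInf_lt (by exact ⟨_, A, m, hA, hm, rfl⟩) h
  obtain ⟨B, m', hB, hanti, hm', hm'η⟩ := exists_antichain_of_isMuAt hG hη hA hm
  exact ⟨B, m', hB, hanti, hm', (hm'η.trans_lt hlt).le⟩

end MuFunctions

section Gluing

variable {p : Cond T} {η ρ : List ℕ} {C : Set (List ℕ)} {𝒜 : List ℕ → Set (List ℕ)}
  {f m : List ℕ → ℝ}

theorem IsFrontAt.biUnion (hC : IsFrontAt p η C) (h𝒜 : ∀ ρ ∈ C, IsFrontAt p ρ (𝒜 ρ)) :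
    IsFrontAt p η (⋃ ρ ∈ C, 𝒜 ρ) := by
  refine ⟨fun a ha => ?_, fun x hx => ?_⟩
  · obtain ⟨ρ, hρ, ha⟩ := Set.mem_iUnion₂.1 ha
    exact ⟨((h𝒜 ρ hρ).1 a ha).1, (hC.1 ρ hρ).2.trans ((h𝒜 ρ hρ).1 a ha).2⟩
  · obtain ⟨n, hn⟩ := hC.2 x hx
    have hηn : η.length ≤ n := by simpa [initSeg_length] using (hC.1 _ hn).2.length_le
    obtain ⟨k, hk⟩ := (h𝒜 _ hn).2 x
      ⟨by rw [initSeg_length], fun j hj => hx.2 j (by rw [initSeg_length] at hj; omega)⟩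
    exact ⟨k, Set.mem_iUnion₂.2 ⟨_, hn, hk⟩⟩

theorem isAntichain_biUnion (hC : IsAntichain (· <+: ·) C)
    (h𝒜 : ∀ ρ ∈ C, IsFrontAt p ρ (𝒜 ρ)) (h𝒜a : ∀ ρ ∈ C, IsAntichain (· <+: ·) (𝒜 ρ)) :
    IsAntichain (· <+: ·) (⋃ ρ ∈ C, 𝒜 ρ) := by
  intro a ha b hb hne hab
  obtain ⟨ρ, hρ, ha⟩ := Set.mem_iUnion₂.1 ha
  obtain ⟨ρ', hρ', hb⟩ := Set.mem_iUnion₂.1 hb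
  obtain rfl : ρ = ρ' := hC.eq_of_prefix_common hρ hρ'
    (((h𝒜 ρ hρ).1 a ha).2.trans hab) ((h𝒜 ρ' hρ').1 b hb).2
  exact h𝒜a ρ hρ ha hb hne hab

theorem IsMuAt.restrict_upper (hG : T.Good) (hC : IsFrontAt p η C)
    (hCa : IsAntichain (· <+: ·) C) (h𝒜 : ∀ ρ ∈ C, IsFrontAt p ρ (𝒜 ρ))
    (hm : IsMuAt p η (⋃ ρ ∈ C, 𝒜 ρ) f m) (hρ : ρ ∈ C) :
    IsMuAt p ρ (𝒜 ρ) f ((cone p ρ (𝒜 ρ)).indicator m) := by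
  refine hm.indicator hG (h𝒜 ρ hρ) (fun b hb => hm.1 b (Set.mem_iUnion₂.2 ⟨ρ, hρ, hb⟩))
    (fun σ hσ hσB => ⟨?_, fun hσU => ?_⟩) ?_
  · obtain ⟨hσt, hρσ, b, hb, hσb⟩ := hσ
    exact ⟨hσt, (hC.1 ρ hρ).2.trans hρσ, b, Set.mem_iUnion₂.2 ⟨ρ, hρ, hb⟩, hσb⟩
  · obtain ⟨ρ', hρ', hσ'⟩ := Set.mem_iUnion₂.1 hσU
    obtain ⟨-, hρσ, b, -, hσb⟩ := hσ
    obtain rfl : ρ' = ρ := hCa.eq_of_prefix_common hρ' hρ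
      (((h𝒜 ρ' hρ').1 σ hσ').2.trans hσb) (hρσ.trans hσb)
    exact hσB hσ'
  · rintro σ ⟨hσt, hρσ, -⟩ - τ hτ ⟨hτt, -, b, hb, hτb⟩
    obtain ⟨ρ', hρ', hb⟩ := Set.mem_iUnion₂.1 hb
    have hρτ := hρσ.trans ((p.succ_eq σ hσt τ).2 hτ).2.1
    obtain rfl : ρ' = ρ := hCa.eq_of_prefix_common hρ' hρ ((h𝒜 ρ' hρ').1 b hb).2 (hρτ.trans hτb)
    exact ⟨hτt, hρτ, b, hb, hτb⟩

theorem IsMuAt.restrict_lower (hG : T.Good) (hC : IsFrontAt p η C)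
    (hCa : IsAntichain (· <+: ·) C) (h𝒜 : ∀ ρ ∈ C, IsFrontAt p ρ (𝒜 ρ))
    (hm : IsMuAt p η (⋃ ρ ∈ C, 𝒜 ρ) f m) :
    IsMuAt p η C m ((cone p η C).indicator m) := by
  refine hm.indicator hG hC (fun _ _ => rfl) (fun σ hσ hσC => ⟨?_, fun hσU => ?_⟩) ?_
  · obtain ⟨hσt, hησ, ρ, hρ, hσρ⟩ := hσ
    obtain ⟨a, ha, hρa⟩ := (h𝒜 ρ hρ).exists_mem (hC.1 ρ hρ).1
    exact ⟨hσt, hησ, a, Set.mem_iUnion₂.2 ⟨ρ, hρ, ha⟩, hσρ.trans hρa⟩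
  · obtain ⟨ρ', hρ', hσ'⟩ := Set.mem_iUnion₂.1 hσU
    obtain ⟨-, -, ρ, hρ, hσρ⟩ := hσ
    exact hσC (hCa.eq_of_prefix_of_prefix hρ' hρ ((h𝒜 ρ' hρ').1 σ hσ').2 hσρ ▸ hρ)
  · rintro σ hσ hσC τ hτ ⟨-, -, b, hb, hτb⟩
    obtain ⟨ρ, hρ, hb⟩ := Set.mem_iUnion₂.1 hb
    exact inCone_of_mem_pos hCa hσ hσC hτ hρ hτb ((h𝒜 ρ hρ).1 b hb).2

/-- By (α) and (γ), below `C` the μ-function of the glued front is at most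
`μ^{c·1}_{p,C} = c · μ^{1}_{p,C}`. -/
theorem hasFrontLE_mul (hG : T.Good) (hN : T.Nice) {c : ℝ} (hc : c ∈ Set.Icc (0 : ℝ) 1)
    (hη : η ∈ p.tree) (hC : IsFrontAt p η C) (hCa : IsAntichain (· <+: ·) C) {mC : List ℕ → ℝ}
    (hmC : IsMuAt p η C (fun _ => 1) mC) (hsmall : ∀ ρ ∈ C, HasFrontLE p ρ c) :
    HasFrontLE p η (c * mC η) := by
  have hone : (1 : ℝ) ∈ Set.Icc (0 : ℝ) 1 := ⟨zero_le_one, le_rfl⟩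
  choose! 𝒜 w h𝒜 h𝒜a hw hwc using hsmall
  have hU := hC.biUnion h𝒜
  have hUa := isAntichain_biUnion hCa h𝒜 h𝒜a
  obtain ⟨m, hm⟩ := exists_isMuAt hG hη hU hUa (fun _ => 1)
  have hmI := hm.mem_Icc hG hη hU hUa fun _ _ => hone
  have hm_le : ∀ ρ ∈ C, m ρ ≤ c := fun ρ hρ => by
    have hρt := (hC.1 ρ hρ).1
    have hr := hm.restrict_upper hG hC hCa h𝒜 hρ
    calc m ρ = (cone p ρ (𝒜 ρ)).indicator m ρ :=
          (Set.indicator_of_mem (mem_cone.2 ((h𝒜 ρ hρ).inCone_self hρt)) m).symm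
      _ ≤ w ρ ρ := hr.le_of_le hN hρt (h𝒜 ρ hρ) (h𝒜a ρ hρ) (hw ρ hρ)
          (hr.mem_Icc hG hρt (h𝒜 ρ hρ) (h𝒜a ρ hρ) fun _ _ => hone)
          ((hw ρ hρ).mem_Icc hG hρt (h𝒜 ρ hρ) (h𝒜a ρ hρ) fun _ _ => hone)
          (fun _ _ => le_rfl) ρ
      _ ≤ c := hwc ρ hρ
  have hlow := hm.restrict_lower hG hC hCa h𝒜
  have hmCI := hmC.mem_Icc hG hη hC hCa fun _ _ => hone
  refine ⟨_, m, hU, hUa, hm, ?_⟩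
  calc m η = (cone p η C).indicator m η :=
        (Set.indicator_of_mem (mem_cone.2 (hC.inCone_self hη)) m).symm
    _ ≤ c * mC η := hlow.le_of_le hN hη hC hCa (hmC.const_mul hN hc hmCI)
        (hlow.mem_Icc hG hη hC hCa fun a _ => hmI a)
        (fun ρ => ⟨mul_nonneg hc.1 (hmCI ρ).1, mul_le_one₀ hc.2 (hmCI ρ).1 (hmCI ρ).2⟩)
        (fun a ha => by simpa using hm_le a ha) η

end Gluing

/-- Lemma `getstr`: if `p ∈ Q^mt_∅(K,Σ,F)` and `0 < ε < 1`, then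
some node `η` of the tree of `p` has `μ^F_p(η) ≥ 1 − ε`. -/
theorem exists_node_with_large_measure
    (T : MTriple H) (hG : T.Good) (hN : T.Nice)
    (p : Cond T) (hp : 0 < muF p)
    (ε : ℝ) (hε0 : 0 < ε) (hε1 : ε < 1) :
    ∃ η ∈ p.tree, 1 - ε ≤ muAt p η := by
  by_contra! hsmall
  have hc : 1 - ε ∈ Set.Icc (0 : ℝ) 1 := ⟨by linarith, by linarith⟩
  have hpow : ∀ k : ℕ, HasFrontLE p p.root ((1 - ε) ^ k) := fun k => by
    induction k with
    | zero => simpa using hasFrontLE_one hG p.root_mem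
    | succ k ih =>
      obtain ⟨C, mC, hC, hCa, hmC, hle⟩ := ih
      refine (hasFrontLE_mul hG hN hc p.root_mem hC hCa hmC fun ρ hρ =>
        hasFrontLE_of_muAt_lt hG (hC.1 ρ hρ).1 (hsmall ρ (hC.1 ρ hρ).1)).mono ?_
      rw [pow_succ']
      exact mul_le_mul_of_nonneg_left hle hc.1
  obtain ⟨k, hk⟩ := exists_pow_lt_of_lt_one hp (by linarith : 1 - ε < 1)
  exact ((hpow k).muAt_le hG p.root_mem).not_gt hk

end MeasuredTrees
end
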